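/- Let K ≥ 1 be an integer, let δ ≠ 0 be real, and let c : ℕ → ℝ be any sequence with |c(n)| < 1 for all n. On the space V of finitely supported functions x : ℕ × Fin 2 → ℝ, define the block-diagonal Hamiltonian H by (H x)(n, 0) = (2K+4n+2)·x(n, 0) + x(n, 1) and (H x)(n, 1) = δ²·x(n, 0) + (2K+4n+2)·x(n, 1), and the bilinear form ⟨x, y⟩_Θ = Σ_{n∈ℕ} [ |δ|·x(n,0)·y(n,0) + c(n)·(x(n,0)·y(n,1) + x(n,1)·y(n,0)) + (1/|δ|)·x(n,1)·y(n,1) ]. Then ⟨·,·⟩_Θ is a symmetric positive-definite bilinear form on V, and H is symmetric with respect to it: ⟨H x, y⟩_Θ = ⟨x, H y⟩_Θ for all x, y ∈ V. -/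

import Mathlib

/-- The tilded block-diagonal Hamiltonian near the exceptional point `α = K`, acting on
functions `x : ℕ × Fin 2 → ℝ`: `(H x)(n, 0) = (2K+4n+2)·x(n,0) + x(n,1)`,
`(H x)(n, 1) = δ²·x(n,0) + (2K+4n+2)·x(n,1)`. -/
noncomputable def blockHamK (K : ℕ) (δ : ℝ) (x : ℕ × Fin 2 → ℝ) : ℕ × Fin 2 → ℝ :=
  fun p =>
    if p.2 = 0 then (2 * (K : ℝ) + 4 * (p.1 : ℝ) + 2) * x (p.1, 0) + x (p.1, 1)
    else δ ^ 2 * x (p.1, 0) + (2 * (K : ℝ) + 4 * (p.1 : ℝ) + 2) * x (p.1, 1)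

/-- The bilinear form `⟨x, y⟩_Θ` induced by the block-diagonal metric
`Θ = ⊕ₙ [[|δ|, c n], [c n, 1/|δ|]]`. -/
noncomputable def ipThetaK (δ : ℝ) (c : ℕ → ℝ) (x y : ℕ × Fin 2 → ℝ) : ℝ :=
  ∑ᶠ n : ℕ, (|δ| * x (n, 0) * y (n, 0)
    + c n * (x (n, 0) * y (n, 1) + x (n, 1) * y (n, 0))
    + (1 / |δ|) * x (n, 1) * y (n, 1))

/-!
On the `n`-th block the form is `|δ|·Q(a, b) = (|δ|a)² + 2·c n·(|δ|a)·b + b²`, which is positive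
for `(a, b) ≠ 0` because `|c n| < 1`; for finitely supported `x` the form is a finite sum of these
block forms, one of them positive. The Hamiltonian is symmetric block by block: `Θₙ Hₙ` is a
symmetric matrix because its off-diagonal entries `|δ| + c n·Eₙ` and `c n·Eₙ + δ²/|δ|` agree.
-/

open Function

noncomputable def thetaBlock (δ γ a b a' b' : ℝ) : ℝ :=
  |δ| * a * a' + γ * (a * b' + b * a') + (1 / |δ|) * b * b'

lemma sq_add_two_mul_mul_add_sq_pos {γ u v : ℝ} (hγ : |γ| < 1) (huv : u ≠ 0 ∨ v ≠ 0) :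
    0 < u ^ 2 + 2 * γ * u * v + v ^ 2 := by
  have hpos : 0 < (u - v) ^ 2 + (u + v) ^ 2 := by
    rcases huv with h | h <;> nlinarith [sq_pos_of_ne_zero h, sq_nonneg (u - v), sq_nonneg (u + v)]
  -- 2·(goal) = (1 - |γ|)·hpos + (|γ| - γ)·(u - v)² + (|γ| + γ)·(u + v)²
  nlinarith [mul_pos (sub_pos.mpr hγ) hpos, mul_nonneg (sub_nonneg.mpr (le_abs_self γ))
    (sq_nonneg (u - v)), mul_nonneg (neg_le_iff_add_nonneg.mp (neg_abs_le γ)) (sq_nonneg (u + v))]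

section ThetaBlock

variable {δ γ : ℝ}

lemma thetaBlock_comm (a b a' b' : ℝ) : thetaBlock δ γ a b a' b' = thetaBlock δ γ a' b' a b := by
  unfold thetaBlock; ring

lemma thetaBlock_self_pos (hδ : δ ≠ 0) (hγ : |γ| < 1) {a b : ℝ} (hab : a ≠ 0 ∨ b ≠ 0) :
    0 < thetaBlock δ γ a b a b := by
  have hd : 0 < |δ| := abs_pos.mpr hδ
  have hda : |δ| * a ≠ 0 ∨ b ≠ 0 := hab.imp_left (mul_ne_zero hd.ne')
  calc 0 < ((|δ| * a) ^ 2 + 2 * γ * (|δ| * a) * b + b ^ 2) / |δ| :=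
        div_pos (sq_add_two_mul_mul_add_sq_pos hγ hda) hd
    _ = thetaBlock δ γ a b a b := by unfold thetaBlock; field_simp; ring

lemma thetaBlock_self_nonneg (hδ : δ ≠ 0) (hγ : |γ| < 1) (a b : ℝ) :
    0 ≤ thetaBlock δ γ a b a b := by
  by_cases hab : a ≠ 0 ∨ b ≠ 0
  · exact (thetaBlock_self_pos hδ hγ hab).le
  · obtain ⟨rfl, rfl⟩ : a = 0 ∧ b = 0 := by simpa [not_or] using hab
    simp [thetaBlock]

lemma thetaBlock_blockHam (E a b a' b' : ℝ) :
    thetaBlock δ γ (E * a + b) (δ ^ 2 * a + E * b) a' b'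
      = thetaBlock δ γ a b (E * a' + b') (δ ^ 2 * a' + E * b') := by
  have hδ : δ ^ 2 * (1 / |δ|) = |δ| := by rw [← sq_abs, sq, mul_one_div, mul_self_div_self]
  unfold thetaBlock
  linear_combination (a * b' - b * a') * hδ

end ThetaBlock

section IpThetaK

variable {δ : ℝ} {c : ℕ → ℝ} {x x' y : ℕ × Fin 2 → ℝ}

lemma ipThetaK_eq_finsum_thetaBlock (δ : ℝ) (c : ℕ → ℝ) (x y : ℕ × Fin 2 → ℝ) :
    ipThetaK δ c x y
      = ∑ᶠ n, thetaBlock δ (c n) (x (n, 0)) (x (n, 1)) (y (n, 0)) (y (n, 1)) :=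
  rfl

lemma hasFiniteSupport_thetaBlock (hx : (support x).Finite) :
    HasFiniteSupport fun n => thetaBlock δ (c n) (x (n, 0)) (x (n, 1)) (y (n, 0)) (y (n, 1)) := by
  refine (hx.image Prod.fst).subset fun n hn => ?_
  by_contra hn'
  have hx0 : ∀ i, x (n, i) = 0 := fun i => by
    by_contra hi
    exact hn' ⟨(n, i), hi, rfl⟩
  simp [thetaBlock, hx0] at hn

lemma ipThetaK_comm : ipThetaK δ c x y = ipThetaK δ c y x :=
  finsum_congr fun _ => thetaBlock_comm _ _ _ _

lemma ipThetaK_add_left (hx : (support x).Finite) (hx' : (support x').Finite) :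
    ipThetaK δ c (x + x') y = ipThetaK δ c x y + ipThetaK δ c x' y := by
  simp only [ipThetaK_eq_finsum_thetaBlock]
  rw [← finsum_add_distrib (hasFiniteSupport_thetaBlock hx) (hasFiniteSupport_thetaBlock hx')]
  exact finsum_congr fun _ => by simp only [Pi.add_apply, thetaBlock]; ring

lemma ipThetaK_add_right (hx : (support x).Finite) (hx' : (support x').Finite) :
    ipThetaK δ c y (x + x') = ipThetaK δ c y x + ipThetaK δ c y x' := by
  rw [ipThetaK_comm, ipThetaK_add_left hx hx', ipThetaK_comm, ipThetaK_comm (x := x')]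

lemma ipThetaK_smul_left (s : ℝ) : ipThetaK δ c (s • x) y = s * ipThetaK δ c x y := by
  simp only [ipThetaK_eq_finsum_thetaBlock, mul_finsum]
  exact finsum_congr fun _ => by simp only [Pi.smul_apply, smul_eq_mul, thetaBlock]; ring

lemma ipThetaK_smul_right (s : ℝ) : ipThetaK δ c x (s • y) = s * ipThetaK δ c x y := by
  rw [ipThetaK_comm, ipThetaK_smul_left, ipThetaK_comm]

lemma ipThetaK_self_pos (hδ : δ ≠ 0) (hc : ∀ n, |c n| < 1) (hx : (support x).Finite)
    (hx0 : x ≠ 0) : 0 < ipThetaK δ c x x := by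
  obtain ⟨⟨n, i⟩, hi⟩ := ne_iff.mp hx0
  have hn : x (n, 0) ≠ 0 ∨ x (n, 1) ≠ 0 := by fin_cases i <;> simp_all
  exact finsum_pos (fun m => thetaBlock_self_nonneg hδ (hc m) _ _)
    ⟨n, thetaBlock_self_pos hδ (hc n) hn⟩ (hasFiniteSupport_thetaBlock hx)

lemma ipThetaK_blockHamK {K : ℕ} :
    ipThetaK δ c (blockHamK K δ x) y = ipThetaK δ c x (blockHamK K δ y) :=
  finsum_congr fun _ => thetaBlock_blockHam _ _ _ _ _

end IpThetaK

theorem stmt_11_general (K : ℕ) (δ : ℝ) (hδ : δ ≠ 0)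
    (c : ℕ → ℝ) (hc : ∀ n, |c n| < 1) :
    -- bilinearity (additivity and homogeneity in each argument)
    (∀ x x' y : ℕ × Fin 2 → ℝ, (Function.support x).Finite →
      (Function.support x').Finite → (Function.support y).Finite →
      ipThetaK δ c (x + x') y = ipThetaK δ c x y + ipThetaK δ c x' y ∧
      ipThetaK δ c y (x + x') = ipThetaK δ c y x + ipThetaK δ c y x') ∧
    (∀ (s : ℝ) (x y : ℕ × Fin 2 → ℝ),
      ipThetaK δ c (s • x) y = s * ipThetaK δ c x y ∧
      ipThetaK δ c x (s • y) = s * ipThetaK δ c x y) ∧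
    -- symmetry
    (∀ x y : ℕ × Fin 2 → ℝ, ipThetaK δ c x y = ipThetaK δ c y x) ∧
    -- positive definiteness
    (∀ x : ℕ × Fin 2 → ℝ, (Function.support x).Finite → x ≠ 0 →
      0 < ipThetaK δ c x x) ∧
    -- symmetry of the Hamiltonian with respect to the form
    (∀ x y : ℕ × Fin 2 → ℝ, (Function.support x).Finite →
      (Function.support y).Finite →
      ipThetaK δ c (blockHamK K δ x) y = ipThetaK δ c x (blockHamK K δ y)) := by
  refine ⟨fun x x' y hx hx' _ => ⟨ipThetaK_add_left hx hx', ipThetaK_add_right hx hx'⟩,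
    fun s x y => ⟨ipThetaK_smul_left s, ipThetaK_smul_right s⟩,
    fun x y => ipThetaK_comm, fun x hx hx0 => ipThetaK_self_pos hδ hc hx hx0,
    fun x y _ _ => ipThetaK_blockHamK⟩

/-- For an integer `K ≥ 1`, real `δ ≠ 0` and any sequence `c` with
`|c n| < 1`, on finitely supported `x : ℕ × Fin 2 → ℝ` the form `⟨·,·⟩_Θ` is bilinear,
symmetric, and positive definite, and the block-diagonal Hamiltonian with blocks
`[[2K+4n+2, 1], [δ², 2K+4n+2]]` is symmetric with respect to it. -/
theorem stmt_11 (K : ℕ) (hK : 1 ≤ K) (δ : ℝ) (hδ : δ ≠ 0)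
    (c : ℕ → ℝ) (hc : ∀ n, |c n| < 1) :
    -- bilinearity (additivity and homogeneity in each argument)
    (∀ x x' y : ℕ × Fin 2 → ℝ, (Function.support x).Finite →
      (Function.support x').Finite → (Function.support y).Finite →
      ipThetaK δ c (x + x') y = ipThetaK δ c x y + ipThetaK δ c x' y ∧
      ipThetaK δ c y (x + x') = ipThetaK δ c y x + ipThetaK δ c y x') ∧
    (∀ (s : ℝ) (x y : ℕ × Fin 2 → ℝ),
      ipThetaK δ c (s • x) y = s * ipThetaK δ c x y ∧
      ipThetaK δ c x (s • y) = s * ipThetaK δ c x y) ∧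
    -- symmetry
    (∀ x y : ℕ × Fin 2 → ℝ, ipThetaK δ c x y = ipThetaK δ c y x) ∧
    -- positive definiteness
    (∀ x : ℕ × Fin 2 → ℝ, (Function.support x).Finite → x ≠ 0 →
      0 < ipThetaK δ c x x) ∧
    -- symmetry of the Hamiltonian with respect to the form
    (∀ x y : ℕ × Fin 2 → ℝ, (Function.support x).Finite →
      (Function.support y).Finite →
      ipThetaK δ c (blockHamK K δ x) y = ipThetaK δ c x (blockHamK K δ y)) :=
  stmt_11_general K δ hδ c hc
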